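/- For any polynomial map p : ℝ^d → ℝ^m with p(0) = 0, the map M_p : T(ℝ^m) → T(ℝ^d) is an algebra homomorphism for the shuffle products: M_p(e) = e and M_p(x ⧢ y) = M_p(x) ⧢ M_p(y) for all x, y ∈ T(ℝ^m). -/

import Mathlib

noncomputable section

open MeasureTheory

/-- Words in the alphabet `{1,…,d}`. -/
abbrev Word (d : ℕ) := List (Fin d)

/-- `T(ℝ^d)`: the real vector space with basis the words in `{1,…,d}`. -/
abbrev Tens (d : ℕ) := Word d →₀ ℝ

namespace SigPaper

variable {d m s : ℕ}

/-- The basis word `w` as an element of `T(ℝ^d)`. -/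
def wordT (w : Word d) : Tens d := Finsupp.single w 1

/-- The shuffle product of two words. -/
def shuffleWord : Word d → Word d → Tens d
  | [], v => Finsupp.single v 1
  | u, [] => Finsupp.single u 1
  | a :: u, b :: v =>
      Finsupp.mapDomain (fun w => a :: w) (shuffleWord u (b :: v)) +
      Finsupp.mapDomain (fun w => b :: w) (shuffleWord (a :: u) v)
  termination_by u v => u.length + v.length
  decreasing_by all_goals simp +arith +decide

/-- The shuffle product `⧢` on `T(ℝ^d)`, the bilinear extension of the shuffle of words. -/
def shuffle (x y : Tens d) : Tens d :=
  x.sum fun u a => y.sum fun v b => (a * b) • shuffleWord u v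

/-- The operator appending the letter `i` at the end of every word (`T_i^+`). -/
def appendLetter (i : Fin d) (x : Tens d) : Tens d :=
  Finsupp.mapDomain (fun w => w ++ [i]) x

/-- The right half-shuffle of two words: `w ≻ (v∘i) = (w ⧢ v)∘i` (zero if the right word
is empty). -/
def halfShuffleWord (u v : Word d) : Tens d :=
  match v.getLast? with
  | none => 0
  | some i => appendLetter i (shuffleWord u v.dropLast)

/-- The right half-shuffle `≻`, extended bilinearly. -/
def halfShuffle (x y : Tens d) : Tens d :=
  x.sum fun u a => y.sum fun v b => (a * b) • halfShuffleWord u v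

/-- The letter-appending operator `T_i^+`. -/
def Tplus (i : Fin d) : Tens d → Tens d := appendLetter i

/-- `T_i^-` on a word: removes the last letter if it equals `i`, otherwise `0`. -/
def TminusWord (i : Fin d) (w : Word d) : Tens d :=
  match w.getLast? with
  | none => 0
  | some j => if j = i then Finsupp.single w.dropLast 1 else 0

/-- The letter-removing operator `T_i^-`. -/
def Tminus (i : Fin d) (x : Tens d) : Tens d := x.sum fun w a => a • TminusWord i w

/-- The single-letter word `i` in `T(ℝ^d)`. -/
def letterT (i : Fin d) : Tens d := Finsupp.single [i] 1

/-- Shuffle powers `x^{⧢ n}`. -/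
def shufflePow (x : Tens d) : ℕ → Tens d
  | 0 => Finsupp.single [] 1
  | n + 1 => shuffle (shufflePow x n) x

/-- Shuffle product of a list of elements. -/
def shuffleList : List (Tens d) → Tens d
  | [] => Finsupp.single [] 1
  | x :: xs => shuffle x (shuffleList xs)

/-- Image of the monomial `x^t` under `φ_d`: the shuffle product of its letters. -/
def phiMon (t : Fin d →₀ ℕ) : Tens d :=
  shuffleList ((List.finRange d).map fun i => shufflePow (letterT i) (t i))

/-- The embedding `φ_d : ℝ[x₁,…,x_d] → (T(ℝ^d), ⧢)` sending the monomial
`x_{i₁}⋯x_{i_l}` to `i₁ ⧢ ⋯ ⧢ i_l`. -/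
def phi (f : MvPolynomial (Fin d) ℝ) : Tens d :=
  f.support.sum fun t => f.coeff t • phiMon t

/-- A polynomial map `p : ℝ^d → ℝ^m`, given by `m` polynomials in `d` variables. -/
abbrev PolyMap (d m : ℕ) := Fin m → MvPolynomial (Fin d) ℝ

/-- `k_p^{ij} = φ_d(∂p_i/∂x_j) ∈ T(ℝ^d)`. -/
def kP (p : PolyMap d m) (i : Fin m) (j : Fin d) : Tens d :=
  phi (MvPolynomial.pderiv j (p i))

/-- Auxiliary: `M_p` on reversed words, so that `M_p(e) = e` and
`M_p(w∘i) = Σ_j (M_p(w) ⧢ k_p^{ij})∘j`. -/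
def MpRev (p : PolyMap d m) : List (Fin m) → Tens d
  | [] => Finsupp.single [] 1
  | i :: w => ∑ j : Fin d, appendLetter j (shuffle (MpRev p w) (kP p i j))

/-- `M_p` on a word. -/
def MpWord (p : PolyMap d m) (w : Word m) : Tens d := MpRev p w.reverse

/-- The linear map `M_p : T(ℝ^m) → T(ℝ^d)`. -/
def Mp (p : PolyMap d m) (x : Tens m) : Tens d := x.sum fun w a => a • MpWord p w

/-- `X : [0,L] → ℝ^d` is piecewise continuously differentiable: there is a partition
`0 = t₀ ≤ t₁ ≤ ⋯ ≤ t_n = L` such that `X` is `C¹` on each subinterval. -/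
def PiecewiseC1 (X : ℝ → Fin d → ℝ) (L : ℝ) : Prop :=
  ∃ (n : ℕ) (t : Fin (n + 1) → ℝ), Monotone t ∧ t 0 = 0 ∧ t (Fin.last n) = L ∧
    ∀ k : Fin n, ContDiffOn ℝ 1 X (Set.Icc (t k.castSucc) (t k.succ))

/-- Iterated-integral signature coefficients, on reversed words:
`⟨σ(X|_{[0,t]}), w∘i⟩ = ∫_0^t ⟨σ(X|_{[0,r]}), w⟩ Ẋ^i_r dr`. -/
def sigRev (X : ℝ → Fin d → ℝ) : List (Fin d) → ℝ → ℝ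
  | [], _ => 1
  | i :: w, t => ∫ r in (0:ℝ)..t, sigRev X w r * deriv (fun u => X u i) r

/-- `⟨σ(X|_{[0,L]}), w⟩`, the signature coefficient of the word `w`. -/
def sigWord (X : ℝ → Fin d → ℝ) (L : ℝ) (w : Word d) : ℝ := sigRev X w.reverse L

/-- The pairing `⟨σ(X|_{[0,L]}), x⟩` for `x ∈ T(ℝ^d)`. -/
def sigT (X : ℝ → Fin d → ℝ) (L : ℝ) (x : Tens d) : ℝ :=
  x.sum fun w a => a * sigWord X L w

/-- The transformed path `p(X) : t ↦ p(X(t))`. -/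
def pPath (p : PolyMap d m) (X : ℝ → Fin d → ℝ) : ℝ → Fin m → ℝ :=
  fun t i => MvPolynomial.eval (X t) (p i)

/-- The translated polynomial map `p̃(y) = p(y + x₀) − p(x₀)`, satisfying `p̃(0) = 0`. -/
def ptilde (p : PolyMap d m) (x0 : Fin d → ℝ) : PolyMap d m := fun i =>
  MvPolynomial.aeval (fun j => MvPolynomial.X j + MvPolynomial.C (x0 j)) (p i) -
    MvPolynomial.C (MvPolynomial.eval x0 (p i))

/-- The pairing `⟨exp_∘(L·𝟙), x⟩` for `x ∈ T(ℝ¹)`: the coefficient of the word of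
length `n` in `exp_∘(L·𝟙)` is `Lⁿ/n!`. -/
def expPair (L : ℝ) (x : Tens 1) : ℝ :=
  x.sum fun w a => a * (L ^ w.length / (w.length.factorial : ℝ))

/-- The pairing `⟨σ(X) ∘ σ(Y), x⟩` of the concatenation product of two signatures with
`x ∈ T(ℝ^d)`: on a word `w` it is `Σ_{u∘v = w} ⟨σ(X), u⟩·⟨σ(Y), v⟩`. -/
def concatPair (X Y : ℝ → Fin d → ℝ) (L : ℝ) (x : Tens d) : ℝ :=
  x.sum fun w a =>
    a * ∑ k ∈ Finset.range (w.length + 1), sigWord X L (w.take k) * sigWord Y L (w.drop k)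

/-!
Shuffle is commutative, associative and satisfies the Leibniz rule on last letters,
`(x∘a) ⧢ (y∘b) = (x ⧢ (y∘b))∘a + ((x∘a) ⧢ y)∘b`. Consequently, for any families `k`, `l` in
`T(ℝ^d)` the operators `S_k x = Σ_j (x ⧢ k_j)∘j` obey the same rule:
`S_k x ⧢ S_l y = S_k (x ⧢ S_l y) + S_l (S_k x ⧢ y)`. As `M_p(w∘i) = S_{k_p^{i·}} (M_p w)`,
applying `M_p` to the Leibniz rule for `(u∘a) ⧢ (v∘b)` and inducting on the total length gives
`M_p(u ⧢ v) = M_p u ⧢ M_p v` on words; bilinearity extends it to `T(ℝ^m)`.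
-/

open Finsupp

theorem Tens.lhom_ext {M : Type*} [AddCommMonoid M] [Module ℝ M] {f g : Tens d →ₗ[ℝ] M}
    (h : ∀ w, f (wordT w) = g (wordT w)) : f = g :=
  Finsupp.basisSingleOne.ext fun w => by simpa [wordT] using h w

theorem Tens.lhom_ext₂ {M : Type*} [AddCommMonoid M] [Module ℝ M]
    {f g : Tens d →ₗ[ℝ] Tens m →ₗ[ℝ] M}
    (h : ∀ u v, f (wordT u) (wordT v) = g (wordT u) (wordT v)) : f = g :=
  Tens.lhom_ext fun u => Tens.lhom_ext (h u)

def prependₗ (a : Fin d) : Tens d →ₗ[ℝ] Tens d := lmapDomain ℝ ℝ (a :: ·)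

def appendₗ (a : Fin d) : Tens d →ₗ[ℝ] Tens d := lmapDomain ℝ ℝ (· ++ [a])

theorem coe_appendₗ (a : Fin d) : ⇑(appendₗ a) = appendLetter a := rfl

@[simp] theorem prependₗ_wordT (a : Fin d) (w : Word d) :
    prependₗ a (wordT w) = wordT (a :: w) :=
  mapDomain_single

@[simp] theorem appendₗ_wordT (a : Fin d) (w : Word d) :
    appendₗ a (wordT w) = wordT (w ++ [a]) :=
  mapDomain_single

theorem prependₗ_appendₗ (a b : Fin d) (x : Tens d) :
    prependₗ a (appendₗ b x) = appendₗ b (prependₗ a x) := by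
  simp only [prependₗ, appendₗ, lmapDomain_apply, ← mapDomain_comp]
  rfl

theorem shuffleWord_nil_left (v : Word d) : shuffleWord [] v = wordT v := by
  rw [shuffleWord, wordT]

theorem shuffleWord_nil_right (u : Word d) : shuffleWord u [] = wordT u := by
  cases u <;> simp [shuffleWord, wordT]

theorem shuffleWord_cons_cons (a b : Fin d) (u v : Word d) : shuffleWord (a :: u) (b :: v) =
    prependₗ a (shuffleWord u (b :: v)) + prependₗ b (shuffleWord (a :: u) v) := by
  rw [shuffleWord]; rfl

theorem shuffleWord_comm : ∀ u v : Word d, shuffleWord u v = shuffleWord v u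
  | [], v => by rw [shuffleWord_nil_left, shuffleWord_nil_right]
  | u, [] => by rw [shuffleWord_nil_left, shuffleWord_nil_right]
  | a :: u, b :: v => by
    rw [shuffleWord_cons_cons, shuffleWord_cons_cons, shuffleWord_comm u, shuffleWord_comm _ v,
      add_comm]
termination_by u v => u.length + v.length

/- `shuffleWord` is defined by recursion on first letters; `M_p` needs the recursion on last
letters. -/
theorem shuffleWord_append_singleton : ∀ (u v : Word d) (a b : Fin d),
    shuffleWord (u ++ [a]) (v ++ [b]) =
      appendₗ a (shuffleWord u (v ++ [b])) + appendₗ b (shuffleWord (u ++ [a]) v)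
  | [], [], a, b => by
    simp [shuffleWord_cons_cons, shuffleWord_nil_left, shuffleWord_nil_right, add_comm]
  | [], e :: v, a, b => by
    have ih := shuffleWord_append_singleton [] v a b
    simp only [List.nil_append, List.cons_append] at ih ⊢
    simp [shuffleWord_cons_cons, ih, shuffleWord_nil_left, prependₗ_appendₗ]
    abel
  | c :: u, [], a, b => by
    have ih := shuffleWord_append_singleton u [] a b
    simp only [List.nil_append, List.cons_append] at ih ⊢
    simp [shuffleWord_cons_cons, ih, shuffleWord_nil_right, prependₗ_appendₗ]
    abel
  | c :: u, e :: v, a, b => by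
    have ih₁ := shuffleWord_append_singleton u (e :: v) a b
    have ih₂ := shuffleWord_append_singleton (c :: u) v a b
    simp only [List.cons_append] at ih₁ ih₂ ⊢
    simp [shuffleWord_cons_cons, ih₁, ih₂, prependₗ_appendₗ]
    abel
termination_by u v => u.length + v.length

def shuffleₗ : Tens d →ₗ[ℝ] Tens d →ₗ[ℝ] Tens d :=
  linearCombination ℝ fun u => linearCombination ℝ (shuffleWord u)

@[simp] theorem shuffleₗ_apply (x y : Tens d) : shuffleₗ x y = shuffle x y := by
  simp [shuffleₗ, shuffle, linearCombination_apply, Finsupp.smul_sum, mul_smul]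

@[simp] theorem shuffle_wordT (u v : Word d) : shuffle (wordT u) (wordT v) = shuffleWord u v := by
  simp [← shuffleₗ_apply, shuffleₗ, wordT]

theorem shuffle_add_left (x x' y : Tens d) : shuffle (x + x') y = shuffle x y + shuffle x' y := by
  simp [← shuffleₗ_apply]

theorem shuffle_add_right (x y y' : Tens d) : shuffle x (y + y') = shuffle x y + shuffle x y' := by
  simp [← shuffleₗ_apply]

theorem shuffle_sum_left {ι : Type*} (s : Finset ι) (f : ι → Tens d) (y : Tens d) :
    shuffle (∑ i ∈ s, f i) y = ∑ i ∈ s, shuffle (f i) y := by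
  simp [← shuffleₗ_apply]

theorem shuffle_sum_right {ι : Type*} (s : Finset ι) (x : Tens d) (f : ι → Tens d) :
    shuffle x (∑ i ∈ s, f i) = ∑ i ∈ s, shuffle x (f i) := by
  simp [← shuffleₗ_apply]

theorem shuffle_comm (x y : Tens d) : shuffle x y = shuffle y x := by
  simpa using LinearMap.congr_fun₂ (Tens.lhom_ext₂ (f := shuffleₗ) (g := shuffleₗ.flip)
    fun u v => by simp [shuffleWord_comm]) x y

theorem shuffle_nil_left (x : Tens d) : shuffle (wordT []) x = x := by
  simpa using LinearMap.congr_fun (Tens.lhom_ext (f := shuffleₗ (wordT []))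
    (g := LinearMap.id) fun u => by simp [shuffleWord_nil_left]) x

theorem shuffle_nil_right (x : Tens d) : shuffle x (wordT []) = x := by
  rw [shuffle_comm, shuffle_nil_left]

theorem shuffle_prependₗ_prependₗ (a b : Fin d) (x y : Tens d) :
    shuffle (prependₗ a x) (prependₗ b y) =
      prependₗ a (shuffle x (prependₗ b y)) + prependₗ b (shuffle (prependₗ a x) y) := by
  simpa using LinearMap.congr_fun₂ (Tens.lhom_ext₂
    (f := shuffleₗ.compl₁₂ (prependₗ a) (prependₗ b))
    (g := (shuffleₗ.compl₂ (prependₗ b)).compr₂ (prependₗ a) +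
      (shuffleₗ ∘ₗ prependₗ a).compr₂ (prependₗ b))
    fun u v => by simp [shuffleWord_cons_cons]) x y

theorem shuffle_appendₗ_appendₗ (a b : Fin d) (x y : Tens d) :
    shuffle (appendₗ a x) (appendₗ b y) =
      appendₗ a (shuffle x (appendₗ b y)) + appendₗ b (shuffle (appendₗ a x) y) := by
  simpa using LinearMap.congr_fun₂ (Tens.lhom_ext₂
    (f := shuffleₗ.compl₁₂ (appendₗ a) (appendₗ b))
    (g := (shuffleₗ.compl₂ (appendₗ b)).compr₂ (appendₗ a) +
      (shuffleₗ ∘ₗ appendₗ a).compr₂ (appendₗ b))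
    fun u v => by simp [shuffleWord_append_singleton]) x y

theorem shuffle_assoc_wordT : ∀ u v w : Word d,
    shuffle (shuffle (wordT u) (wordT v)) (wordT w) =
      shuffle (wordT u) (shuffle (wordT v) (wordT w))
  | [], v, w => by rw [shuffle_nil_left, shuffle_nil_left]
  | u, [], w => by rw [shuffle_nil_right, shuffle_nil_left]
  | u, v, [] => by rw [shuffle_nil_right, shuffle_nil_right]
  | a :: u, b :: v, c :: w => by
    have ih₁ := shuffle_assoc_wordT u (b :: v) (c :: w)
    have ih₂ := shuffle_assoc_wordT (a :: u) v (c :: w)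
    have ih₃ := shuffle_assoc_wordT (a :: u) (b :: v) w
    simp only [← prependₗ_wordT] at ih₁ ih₂ ih₃ ⊢
    set U := wordT u
    set V := wordT v
    set W := wordT w
    calc shuffle (shuffle (prependₗ a U) (prependₗ b V)) (prependₗ c W)
        = prependₗ a (shuffle (shuffle U (prependₗ b V)) (prependₗ c W)) +
            prependₗ b (shuffle (shuffle (prependₗ a U) V) (prependₗ c W)) +
            prependₗ c (shuffle (shuffle (prependₗ a U) (prependₗ b V)) W) := by
          simp only [shuffle_prependₗ_prependₗ, map_add, shuffle_add_left]
          abel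
      _ = prependₗ a (shuffle U (shuffle (prependₗ b V) (prependₗ c W))) +
            prependₗ b (shuffle (prependₗ a U) (shuffle V (prependₗ c W))) +
            prependₗ c (shuffle (prependₗ a U) (shuffle (prependₗ b V) W)) := by
          rw [ih₁, ih₂, ih₃]
      _ = shuffle (prependₗ a U) (shuffle (prependₗ b V) (prependₗ c W)) := by
          simp only [shuffle_prependₗ_prependₗ, map_add, shuffle_add_right]
          abel
termination_by u v w => u.length + v.length + w.length

theorem shuffle_assoc (x y z : Tens d) : shuffle (shuffle x y) z = shuffle x (shuffle y z) := by
  have h : (shuffleₗ (d := d)).compr₂ shuffleₗ =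
      (LinearMap.llcomp ℝ _ _ _ ∘ₗ shuffleₗ).compl₂ shuffleₗ :=
    Tens.lhom_ext₂ fun u v => Tens.lhom_ext fun w => by
      simpa using shuffle_assoc_wordT u v w
  simpa using LinearMap.congr_fun (LinearMap.congr_fun₂ h x y) z

theorem shuffle_right_comm (x y z : Tens d) :
    shuffle (shuffle x y) z = shuffle (shuffle x z) y := by
  rw [shuffle_assoc, shuffle_comm y, shuffle_assoc]

def shuffleAppend (k : Fin d → Tens d) : Tens d →ₗ[ℝ] Tens d :=
  ∑ j, appendₗ j ∘ₗ shuffleₗ.flip (k j)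

theorem shuffleAppend_apply (k : Fin d → Tens d) (x : Tens d) :
    shuffleAppend k x = ∑ j, appendₗ j (shuffle x (k j)) := by
  simp [shuffleAppend]

theorem shuffle_shuffleAppend_shuffleAppend (k l : Fin d → Tens d) (x y : Tens d) :
    shuffle (shuffleAppend k x) (shuffleAppend l y) =
      shuffleAppend k (shuffle x (shuffleAppend l y)) +
        shuffleAppend l (shuffle (shuffleAppend k x) y) := by
  calc shuffle (shuffleAppend k x) (shuffleAppend l y)
      = ∑ j, appendₗ j (shuffle (shuffle x (k j)) (shuffleAppend l y)) +
          ∑ i, appendₗ i (shuffle (shuffleAppend k x) (shuffle y (l i))) := by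
        simp only [shuffleAppend_apply, shuffle_sum_left, shuffle_sum_right,
          shuffle_appendₗ_appendₗ, map_sum, Finset.sum_add_distrib]
        rw [Finset.sum_comm (γ := Fin d) (f := fun j i => appendₗ i _)]
    _ = shuffleAppend k (shuffle x (shuffleAppend l y)) +
          shuffleAppend l (shuffle (shuffleAppend k x) y) := by
        simp only [shuffleAppend_apply, shuffle_right_comm, shuffle_assoc]

def Mpₗ (p : PolyMap d m) : Tens m →ₗ[ℝ] Tens d := linearCombination ℝ (MpWord p)

@[simp] theorem Mpₗ_apply (p : PolyMap d m) (x : Tens m) : Mpₗ p x = Mp p x := rfl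

theorem Mp_add (p : PolyMap d m) (x y : Tens m) : Mp p (x + y) = Mp p x + Mp p y :=
  map_add (Mpₗ p) x y

theorem Mp_wordT (p : PolyMap d m) (w : Word m) : Mp p (wordT w) = MpWord p w := by
  simp [Mp, wordT]

theorem Mp_wordT_nil (p : PolyMap d m) : Mp p (wordT []) = wordT [] := by
  rw [Mp_wordT]; rfl

theorem MpWord_append_singleton (p : PolyMap d m) (u : Word m) (a : Fin m) :
    MpWord p (u ++ [a]) = shuffleAppend (kP p a) (MpWord p u) := by
  simp [MpWord, MpRev, shuffleAppend_apply, coe_appendₗ]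

theorem Mp_appendₗ (p : PolyMap d m) (a : Fin m) (x : Tens m) :
    Mp p (appendₗ a x) = shuffleAppend (kP p a) (Mp p x) := by
  simpa using LinearMap.congr_fun (Tens.lhom_ext (f := Mpₗ p ∘ₗ appendₗ a)
    (g := shuffleAppend (kP p a) ∘ₗ Mpₗ p)
    fun u => by simp [Mp_wordT, MpWord_append_singleton]) x

theorem Mp_shuffle_wordT (p : PolyMap d m) (u v : Word m) :
    Mp p (shuffle (wordT u) (wordT v)) = shuffle (Mp p (wordT u)) (Mp p (wordT v)) := by
  rcases u.eq_nil_or_concat' with rfl | ⟨u, a, rfl⟩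
  · rw [shuffle_nil_left, Mp_wordT_nil, shuffle_nil_left]
  rcases v.eq_nil_or_concat' with rfl | ⟨v, b, rfl⟩
  · rw [shuffle_nil_right, Mp_wordT_nil, shuffle_nil_right]
  have ih₁ := Mp_shuffle_wordT p u (v ++ [b])
  have ih₂ := Mp_shuffle_wordT p (u ++ [a]) v
  simp only [← appendₗ_wordT] at ih₁ ih₂ ⊢
  rw [shuffle_appendₗ_appendₗ, Mp_add, Mp_appendₗ, Mp_appendₗ, ih₁, ih₂, Mp_appendₗ, Mp_appendₗ,
    shuffle_shuffleAppend_shuffleAppend]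
termination_by u.length + v.length

theorem Mp_shuffle (p : PolyMap d m) (x y : Tens m) :
    Mp p (shuffle x y) = shuffle (Mp p x) (Mp p y) := by
  simpa using LinearMap.congr_fun₂ (Tens.lhom_ext₂ (f := shuffleₗ.compr₂ (Mpₗ p))
    (g := (shuffleₗ ∘ₗ Mpₗ p).compl₂ (Mpₗ p))
    fun u v => by simpa using Mp_shuffle_wordT p u v) x y

theorem Mp_shuffle_hom_general (d m : ℕ) (p : PolyMap d m) :
    Mp p (wordT ([] : Word m)) = wordT ([] : Word d) ∧
    ∀ x y : Tens m, Mp p (shuffle x y) = shuffle (Mp p x) (Mp p y) :=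
  ⟨Mp_wordT_nil p, Mp_shuffle p⟩

/-- For any polynomial map `p : ℝ^d → ℝ^m` with `p(0) = 0`, the map
`M_p : T(ℝ^m) → T(ℝ^d)` is an algebra homomorphism for the shuffle products. -/
theorem Mp_shuffle_hom (d m : ℕ) (p : PolyMap d m)
    (hp : ∀ i, MvPolynomial.eval (0 : Fin d → ℝ) (p i) = 0) :
    Mp p (wordT ([] : Word m)) = wordT ([] : Word d) ∧
    ∀ x y : Tens m, Mp p (shuffle x y) = shuffle (Mp p x) (Mp p y) :=
  Mp_shuffle_hom_general d m p

end SigPaper
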